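/- arXiv:2206.11817 — 2 statements merged into one kernel-verified Lean document; each statement's English description precedes it below -/
import Mathlib

section
/- Let m ≥ 1 and 0 ≤ ℓ ≤ m − 1 be integers and let f : ℝ³ → ℝ be a Schwartz function. Then ‖D^ℓ f‖_{L^∞(ℝ³)} · ‖D^{m−ℓ} f‖_{L²(ℝ³)} ≤ C ‖f‖_{L²(ℝ³)}^{1/2} ‖D f‖_{L²(ℝ³)}^{1/2} ‖D^{m+1} f‖_{L²(ℝ³)} for an absolute constant C. -/
/-!
On the Fourier side every norm in the statement is a moment `I s = ∫ |ξ|^{2s} |f̂ ξ|²`, and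
Cauchy–Schwarz gives `I (s+1)² ≤ I s · I (s+2)`, i.e. `s ↦ log I s` is convex; chords of this
convex sequence are the interpolation inequalities.

The sup norm of `D^ℓ f` is at most `∫ |ξ|^ℓ |f̂|`. Writing `1 = (R + |ξ|)^{-2} · (R + |ξ|)^2`
and applying Cauchy–Schwarz, the weight `(R + |ξ|)^{-4}` is integrable in dimension `3 < 4` with
integral `c / R`; the choice `R⁴ = I (ℓ+2) / I ℓ` gives the Agmon bound
`‖D^ℓ f‖_∞⁸ ≤ 16⁴ c⁴ I ℓ · I (ℓ+2)³`. Convexity of `log I`, anchored at `0`, `1` and `m + 1`,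
bounds `I ℓ · I (ℓ+2)³ · I (m-ℓ)⁴` by `I 0² · I 1² · I (m+1)⁴`, which is the claim raised to
the eighth power.
-/

open MeasureTheory FourierTransform Real
open scoped SchwartzMap
open Module (finrank)

theorem sq_integral_mul_le_integral_sq_mul_integral_sq {α : Type*} [MeasurableSpace α]
    {μ : Measure α} {u v : α → ℝ} (hu : MemLp u 2 μ) (hv : MemLp v 2 μ) :
    (∫ x, u x * v x ∂μ) ^ 2 ≤ (∫ x, u x ^ 2 ∂μ) * ∫ x, v x ^ 2 ∂μ := by
  have holder := integral_mul_norm_le_Lp_mul_Lq (μ := μ) Real.HolderConjugate.two_two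
    (by simpa using hu) (by simpa using hv)
  simp only [Real.norm_eq_abs, Real.rpow_two, sq_abs] at holder
  calc (∫ x, u x * v x ∂μ) ^ 2 ≤ (∫ x, |u x| * |v x| ∂μ) ^ 2 := by
        rw [← sq_abs]
        gcongr
        exact abs_integral_le_integral_abs.trans_eq (by simp only [abs_mul])
    _ ≤ ((∫ x, u x ^ 2 ∂μ) ^ (1 / 2 : ℝ) * (∫ x, v x ^ 2 ∂μ) ^ (1 / 2 : ℝ)) ^ 2 := by
        gcongr
    _ = (∫ x, u x ^ 2 ∂μ) * ∫ x, v x ^ 2 ∂μ := by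
        rw [mul_pow, ← sqrt_eq_rpow, ← sqrt_eq_rpow,
          sq_sqrt (integral_nonneg fun x => by positivity),
          sq_sqrt (integral_nonneg fun x => by positivity)]

theorem le_chord_of_two_mul_le_add {u : ℕ → ℝ} (hu : ∀ s, 2 * u (s + 1) ≤ u s + u (s + 2))
    {a s b : ℕ} (has : a ≤ s) (hsb : s ≤ b) :
    ((b : ℝ) - a) * u s ≤ ((b : ℝ) - s) * u a + ((s : ℝ) - a) * u b := by
  have hmono : Monotone fun t => u (t + 1) - u t :=
    monotone_nat_of_le_succ fun t => by linarith [hu t]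
  have left : u s - u a ≤ ((s : ℝ) - a) * (u (s + 1) - u s) := by
    have := Finset.sum_le_card_nsmul (Finset.Ico a s) _ _
      fun t ht => hmono (Finset.mem_Ico.1 ht).2.le
    rwa [Finset.sum_Ico_sub u has, Nat.card_Ico, nsmul_eq_mul, Nat.cast_sub has] at this
  have right : ((b : ℝ) - s) * (u (s + 1) - u s) ≤ u b - u s := by
    have := Finset.card_nsmul_le_sum (Finset.Ico s b) _ _
      fun t ht => hmono (Finset.mem_Ico.1 ht).1
    rwa [Finset.sum_Ico_sub u hsb, Nat.card_Ico, nsmul_eq_mul, Nat.cast_sub hsb] at this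
  have hsa : (0 : ℝ) ≤ s - a := sub_nonneg.2 (by exact_mod_cast has)
  have hbs : (0 : ℝ) ≤ b - s := sub_nonneg.2 (by exact_mod_cast hsb)
  nlinarith [mul_le_mul_of_nonneg_left left hbs, mul_le_mul_of_nonneg_left right hsa]

theorem add_three_mul_add_four_mul_le {u : ℕ → ℝ} (hu : ∀ s, 2 * u (s + 1) ≤ u s + u (s + 2))
    {m ℓ : ℕ} (hℓ : ℓ < m) :
    u ℓ + 3 * u (ℓ + 2) + 4 * u (m - ℓ) ≤ 2 * u 0 + 2 * u 1 + 4 * u (m + 1) := by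
  have chord {s : ℕ} (h₁ : 1 ≤ s) (h₂ : s ≤ m + 1) :
      (m : ℝ) * u s ≤ (m + 1 - s) * u 1 + (s - 1) * u (m + 1) := by
    simpa using le_chord_of_two_mul_le_add hu h₁ h₂
  have anchor : ((m : ℝ) + 1) * u 1 ≤ m * u 0 + u (m + 1) := by
    simpa using le_chord_of_two_mul_le_add hu (zero_le_one' ℕ) (by omega : 1 ≤ m + 1)
  refine le_of_mul_le_mul_left ?_ (by exact_mod_cast (by omega : 0 < m) : (0 : ℝ) < m)
  rcases ℓ.eq_zero_or_pos with rfl | hℓ₀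
  · have h₂ := chord (s := 2) (by omega) (by omega)
    have h₃ := chord (s := m) (by omega) le_self_add
    push_cast at h₂ h₃ ⊢
    linear_combination 3 * h₂ + 4 * h₃ + anchor
  · have h₁ := chord (s := ℓ) hℓ₀ (by omega)
    have h₂ := chord (s := ℓ + 2) (by omega) (by omega)
    have h₃ := chord (s := m - ℓ) (by omega) (by omega)
    rw [Nat.cast_sub hℓ.le] at h₃
    push_cast at h₁ h₂ h₃ ⊢
    linear_combination h₁ + 3 * h₂ + 4 * h₃ + 2 * anchor

theorem mul_pow_three_mul_pow_four_le {I : ℕ → ℝ} (hpos : ∀ s, 0 < I s)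
    (hI : ∀ s, I (s + 1) ^ 2 ≤ I s * I (s + 2)) {m ℓ : ℕ} (hℓ : ℓ < m) :
    I ℓ * I (ℓ + 2) ^ 3 * I (m - ℓ) ^ 4 ≤ I 0 ^ 2 * I 1 ^ 2 * I (m + 1) ^ 4 := by
  obtain ⟨u, rfl⟩ : ∃ u : ℕ → ℝ, I = fun s => exp (u s) :=
    ⟨fun s => log (I s), funext fun s => (exp_log (hpos s)).symm⟩
  simp only [← exp_nat_mul, ← exp_add, exp_le_exp, Nat.cast_ofNat] at hI ⊢
  linarith [add_three_mul_add_four_mul_le hI hℓ]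

theorem inv_add_norm_pow_four_eq {E : Type*} [NormedAddCommGroup E] [NormedSpace ℝ E] {R : ℝ}
    (hR : 0 < R) (ξ : E) :
    ((R + ‖ξ‖) ^ 4)⁻¹ = (R ^ 4)⁻¹ * ((1 + ‖R⁻¹ • ξ‖) ^ 4)⁻¹ := by
  rw [← mul_inv, ← mul_pow, norm_smul, norm_inv, norm_of_nonneg hR.le, mul_add,
    mul_inv_cancel_left₀ hR.ne', mul_one]

section AddHaar

variable {E : Type*} [NormedAddCommGroup E] [NormedSpace ℝ E] [FiniteDimensional ℝ E]
  [MeasurableSpace E] [BorelSpace E] (μ : Measure E) [μ.IsAddHaarMeasure]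

theorem integrable_inv_add_norm_pow_four (hE : finrank ℝ E < 4) {R : ℝ} (hR : 0 < R) :
    Integrable (fun ξ : E => ((R + ‖ξ‖) ^ 4)⁻¹) μ := by
  have h₁ : Integrable (fun η : E => ((1 + ‖η‖) ^ 4)⁻¹) μ := by
    refine (integrable_one_add_norm (μ := μ) (r := 4) (by exact_mod_cast hE)).congr
      (.of_forall fun η => ?_)
    dsimp only
    rw [rpow_neg (by positivity), ← rpow_natCast]
    norm_num
  simpa only [inv_add_norm_pow_four_eq hR] using
    (h₁.comp_smul (inv_ne_zero hR.ne')).const_mul (R ^ 4)⁻¹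

theorem integral_inv_add_norm_pow_four {R : ℝ} (hR : 0 < R) :
    ∫ ξ : E, ((R + ‖ξ‖) ^ 4)⁻¹ ∂μ =
      R ^ finrank ℝ E / R ^ 4 * ∫ η : E, ((1 + ‖η‖) ^ 4)⁻¹ ∂μ := by
  simp only [inv_add_norm_pow_four_eq hR, integral_const_mul,
    Measure.integral_comp_inv_smul_of_nonneg μ (fun η : E => ((1 + ‖η‖) ^ 4)⁻¹) hR.le,
    smul_eq_mul]
  ring

theorem sq_integral_le_div_mul_integral_sq_add (hE : finrank ℝ E = 3) {h : E → ℝ}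
    (hh : AEStronglyMeasurable h μ) (h₂ : Integrable (fun ξ => h ξ ^ 2) μ)
    (h₄ : Integrable (fun ξ => ‖ξ‖ ^ 4 * h ξ ^ 2) μ) {R : ℝ} (hR : 0 < R) :
    (∫ ξ, h ξ ∂μ) ^ 2 ≤ (∫ η, ((1 + ‖η‖) ^ 4)⁻¹ ∂μ) / R *
      (8 * (R ^ 4 * ∫ ξ, h ξ ^ 2 ∂μ + ∫ ξ, ‖ξ‖ ^ 4 * h ξ ^ 2 ∂μ)) := by
  set w : E → ℝ := fun ξ => (R + ‖ξ‖) ^ 2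
  have hw (ξ : E) : 0 < w ξ := by positivity
  have weight_le (ξ : E) :
      (w ξ * h ξ) ^ 2 ≤ 8 * (R ^ 4 * h ξ ^ 2) + 8 * (‖ξ‖ ^ 4 * h ξ ^ 2) := by
    have : w ξ ^ 2 ≤ 8 * (R ^ 4 + ‖ξ‖ ^ 4) := by
      nlinarith [sq_nonneg (R - ‖ξ‖), sq_nonneg (R ^ 2 - ‖ξ‖ ^ 2), norm_nonneg ξ]
    nlinarith [sq_nonneg (h ξ)]
  have hdom : Integrable (fun ξ => 8 * (R ^ 4 * h ξ ^ 2) + 8 * (‖ξ‖ ^ 4 * h ξ ^ 2)) μ :=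
    ((h₂.const_mul _).const_mul 8).add (h₄.const_mul 8)
  have hu : MemLp (fun ξ => (w ξ)⁻¹) 2 μ := by
    refine (memLp_two_iff_integrable_sq (by fun_prop)).2 ?_
    simpa only [w, inv_pow, ← pow_mul] using integrable_inv_add_norm_pow_four μ (by omega) hR
  have hv : MemLp (fun ξ => w ξ * h ξ) 2 μ := by
    refine (memLp_two_iff_integrable_sq (by fun_prop)).2 (hdom.mono' (by fun_prop) ?_)
    exact .of_forall fun ξ => (norm_of_nonneg (sq_nonneg _)).trans_le (weight_le ξ)
  calc (∫ ξ, h ξ ∂μ) ^ 2 = (∫ ξ, (w ξ)⁻¹ * (w ξ * h ξ) ∂μ) ^ 2 := by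
        simp only [inv_mul_cancel_left₀ (hw _).ne']
    _ ≤ (∫ ξ, (w ξ)⁻¹ ^ 2 ∂μ) * ∫ ξ, (w ξ * h ξ) ^ 2 ∂μ :=
        sq_integral_mul_le_integral_sq_mul_integral_sq hu hv
    _ ≤ (∫ ξ, (w ξ)⁻¹ ^ 2 ∂μ) * ∫ ξ, 8 * (R ^ 4 * h ξ ^ 2) + 8 * (‖ξ‖ ^ 4 * h ξ ^ 2) ∂μ :=
        mul_le_mul_of_nonneg_left (integral_mono hv.integrable_sq hdom weight_le)
          (integral_nonneg fun ξ => sq_nonneg _)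
    _ = _ := by
        simp only [w, inv_pow, ← pow_mul, integral_inv_add_norm_pow_four μ hR, hE,
          integral_add ((h₂.const_mul _).const_mul 8) (h₄.const_mul 8), integral_const_mul]
        field_simp

theorem integral_pow_eight_le_of_finrank_eq_three (hE : finrank ℝ E = 3) {h : E → ℝ}
    (hh : AEStronglyMeasurable h μ) (h₂ : Integrable (fun ξ => h ξ ^ 2) μ)
    (h₄ : Integrable (fun ξ => ‖ξ‖ ^ 4 * h ξ ^ 2) μ) (hA : 0 < ∫ ξ, h ξ ^ 2 ∂μ)
    (hB : 0 < ∫ ξ, ‖ξ‖ ^ 4 * h ξ ^ 2 ∂μ) :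
    (∫ ξ, h ξ ∂μ) ^ 8 ≤ 16 ^ 4 * (∫ η, ((1 + ‖η‖) ^ 4)⁻¹ ∂μ) ^ 4 *
      (∫ ξ, h ξ ^ 2 ∂μ) * (∫ ξ, ‖ξ‖ ^ 4 * h ξ ^ 2 ∂μ) ^ 3 := by
  set A := ∫ ξ, h ξ ^ 2 ∂μ
  set B := ∫ ξ, ‖ξ‖ ^ 4 * h ξ ^ 2 ∂μ
  set c := ∫ η, ((1 + ‖η‖) ^ 4)⁻¹ ∂μ
  set R := (B / A) ^ ((4 : ℕ) : ℝ)⁻¹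
  have hR : 0 < R := by positivity
  have hR4 : R ^ 4 = B / A := rpow_inv_natCast_pow (by positivity) (by norm_num)
  have hsq := sq_integral_le_div_mul_integral_sq_add μ hE hh h₂ h₄ hR
  rw [hR4, div_mul_cancel₀ _ hA.ne'] at hsq
  calc (∫ ξ, h ξ ∂μ) ^ 8 = ((∫ ξ, h ξ ∂μ) ^ 2) ^ 4 := by ring
    _ ≤ (c / R * (8 * (B + B))) ^ 4 := by gcongr
    _ = 16 ^ 4 * c ^ 4 * A * B ^ 3 := by
        rw [mul_pow, div_pow, hR4]
        field_simp
        ring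

end AddHaar

theorem SchwartzMap.integrable_pow_mul_norm_sq {D F : Type*} [NormedAddCommGroup D]
    [NormedSpace ℝ D] [MeasurableSpace D] [BorelSpace D] [SecondCountableTopology D]
    [NormedAddCommGroup F] [NormedSpace ℝ F] (G : 𝓢(D, F)) (μ : Measure D)
    [μ.HasTemperateGrowth] (k : ℕ) : Integrable (fun ξ => ‖ξ‖ ^ k * ‖G ξ‖ ^ 2) μ := by
  have := (G.integrable_pow_mul μ k).mul_bdd G.continuous.norm.aestronglyMeasurable
    (.of_forall fun ξ => (norm_norm (G ξ)).trans_le (G.norm_le_seminorm ℝ ξ))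
  simpa only [mul_assoc, ← sq] using this

section InnerProductSpace

variable {V F : Type*} [NormedAddCommGroup V] [InnerProductSpace ℝ V] [FiniteDimensional ℝ V]
  [MeasurableSpace V] [BorelSpace V] [NormedAddCommGroup F]

theorem norm_fourierInv_le_integral_norm [NormedSpace ℂ F] (g : V → F) (x : V) :
    ‖𝓕⁻ g x‖ ≤ ∫ ξ, ‖g ξ‖ :=
  VectorFourier.norm_fourierIntegral_le_integral_norm _ _ _ g x

/-- `homSobolevNormSq (𝓕 f) s` is `‖D^s f‖²_{L²}`. -/
noncomputable def homSobolevNormSq (G : V → F) (s : ℕ) : ℝ :=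
  ∫ ξ, ‖ξ‖ ^ (2 * s) * ‖G ξ‖ ^ 2

theorem homSobolevNormSq_nonneg (G : V → F) (s : ℕ) : 0 ≤ homSobolevNormSq G s :=
  integral_nonneg fun _ => by positivity

theorem homSobolevNormSq_zero_right (G : V → F) :
    homSobolevNormSq G 0 = ∫ ξ, ‖G ξ‖ ^ 2 := by
  simp [homSobolevNormSq]

namespace SchwartzMap

theorem homSobolevNormSq_succ_sq_le [NormedSpace ℝ F] (G : 𝓢(V, F)) (s : ℕ) :
    homSobolevNormSq G (s + 1) ^ 2 ≤ homSobolevNormSq G s * homSobolevNormSq G (s + 2) := by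
  have memLp (k : ℕ) : MemLp (fun ξ => ‖ξ‖ ^ k * ‖G ξ‖) 2 := by
    refine (memLp_two_iff_integrable_sq (by fun_prop)).2 ?_
    simpa only [mul_pow, ← pow_mul, mul_comm k] using G.integrable_pow_mul_norm_sq volume (2 * k)
  convert sq_integral_mul_le_integral_sq_mul_integral_sq (memLp s) (memLp (s + 2)) using 3 <;>
    simp only [homSobolevNormSq] <;> congr 1 <;> ext ξ <;> ring

theorem homSobolevNormSq_pos [NormedSpace ℝ F] [Nontrivial V] {G : 𝓢(V, F)} (hG : G ≠ 0)
    (s : ℕ) :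
    0 < homSobolevNormSq G s := by
  obtain ⟨ξ, hξ, hGξ⟩ : ∃ ξ : V, ξ ≠ 0 ∧ G ξ ≠ 0 := by
    by_contra! h
    exact hG <| SchwartzMap.ext <| congrFun <|
      Continuous.ext_on (dense_compl_singleton 0) G.continuous continuous_const h
  exact integral_pos_of_integrable_nonneg_nonzero (by fun_prop)
    (G.integrable_pow_mul_norm_sq volume _) (fun _ => by positivity) (by positivity)

theorem norm_fourierInv_pow_eight_le [NormedSpace ℂ F] (hV : finrank ℝ V = 3) {G : 𝓢(V, F)}
    (hG : G ≠ 0) (ℓ : ℕ) (x : V) :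
    ‖𝓕⁻ (fun ξ => (‖ξ‖ : ℂ) ^ ℓ • G ξ) x‖ ^ 8 ≤ 16 ^ 4 * (∫ η : V, ((1 + ‖η‖) ^ 4)⁻¹) ^ 4 *
      homSobolevNormSq G ℓ * homSobolevNormSq G (ℓ + 2) ^ 3 := by
  have : Nontrivial V := Module.nontrivial_of_finrank_eq_succ hV
  set h : V → ℝ := fun ξ => ‖ξ‖ ^ ℓ * ‖G ξ‖
  have h₂ : (fun ξ => h ξ ^ 2) = fun ξ => ‖ξ‖ ^ (2 * ℓ) * ‖G ξ‖ ^ 2 := by ext; ring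
  have h₄ : (fun ξ => ‖ξ‖ ^ 4 * h ξ ^ 2) = fun ξ => ‖ξ‖ ^ (2 * (ℓ + 2)) * ‖G ξ‖ ^ 2 := by
    ext; ring
  have agmon := integral_pow_eight_le_of_finrank_eq_three volume hV (h := h) (by fun_prop)
    (h₂ ▸ G.integrable_pow_mul_norm_sq volume _) (h₄ ▸ G.integrable_pow_mul_norm_sq volume _)
    (h₂ ▸ G.homSobolevNormSq_pos hG ℓ) (h₄ ▸ G.homSobolevNormSq_pos hG (ℓ + 2))
  rw [h₂, h₄] at agmon
  refine le_trans ?_ agmon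
  gcongr
  simpa [h, norm_smul] using norm_fourierInv_le_integral_norm (fun ξ => (‖ξ‖ : ℂ) ^ ℓ • G ξ) x

theorem norm_fourierInv_pow_eight_mul_le [NormedSpace ℂ F] (hV : finrank ℝ V = 3) (G : 𝓢(V, F))
    {m ℓ : ℕ} (hℓ : ℓ < m) (x : V) :
    ‖𝓕⁻ (fun ξ => (‖ξ‖ : ℂ) ^ ℓ • G ξ) x‖ ^ 8 * homSobolevNormSq G (m - ℓ) ^ 4 ≤
      16 ^ 4 * (∫ η : V, ((1 + ‖η‖) ^ 4)⁻¹) ^ 4 *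
        (homSobolevNormSq G 0 ^ 2 * homSobolevNormSq G 1 ^ 2 *
          homSobolevNormSq G (m + 1) ^ 4) := by
  rcases eq_or_ne G 0 with rfl | hG
  · simp [homSobolevNormSq]
  have : Nontrivial V := Module.nontrivial_of_finrank_eq_succ hV
  calc _ ≤ 16 ^ 4 * (∫ η : V, ((1 + ‖η‖) ^ 4)⁻¹) ^ 4 * homSobolevNormSq G ℓ *
        homSobolevNormSq G (ℓ + 2) ^ 3 * homSobolevNormSq G (m - ℓ) ^ 4 := by
        gcongr
        exact G.norm_fourierInv_pow_eight_le hV hG ℓ x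
    _ = 16 ^ 4 * (∫ η : V, ((1 + ‖η‖) ^ 4)⁻¹) ^ 4 * (homSobolevNormSq G ℓ *
        homSobolevNormSq G (ℓ + 2) ^ 3 * homSobolevNormSq G (m - ℓ) ^ 4) := by ring
    _ ≤ _ := mul_le_mul_of_nonneg_left (mul_pow_three_mul_pow_four_le
        (G.homSobolevNormSq_pos hG) G.homSobolevNormSq_succ_sq_le hℓ) (by positivity)

end SchwartzMap

end InnerProductSpace

theorem mul_sqrt_le_of_pow_eight_le {P a b d e C : ℝ} (ha : 0 ≤ a) (hb : 0 ≤ b)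
    (hd : 0 ≤ d) (he : 0 ≤ e) (hC : 0 ≤ C) (h : P ^ 8 * a ^ 4 ≤ C ^ 8 * (b ^ 2 * d ^ 2 * e ^ 4)) :
    P * √a ≤ C * √b ^ (1 / 2 : ℝ) * √d ^ (1 / 2 : ℝ) * √e := by
  have sqrt_pow_eight {z : ℝ} (hz : 0 ≤ z) : √z ^ 8 = z ^ 4 := by
    rw [show 8 = 2 * 4 by rfl, pow_mul, sq_sqrt hz]
  have sqrt_rpow_half_pow_eight {z : ℝ} (hz : 0 ≤ z) : (√z ^ (1 / 2 : ℝ)) ^ 8 = z ^ 2 := by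
    rw [← rpow_natCast, ← rpow_mul (sqrt_nonneg z), sqrt_eq_rpow, ← rpow_mul hz]
    norm_num
  refine le_of_pow_le_pow_left₀ (n := 8) (by norm_num) (by positivity) ?_
  simpa only [mul_pow, sqrt_pow_eight, sqrt_rpow_half_pow_eight, ha, hb, hd, he, mul_assoc] using h

/-- For integers `m ≥ 1`, `0 ≤ ℓ ≤ m - 1` and Schwartz `f : ℝ³ → ℝ`,
`‖D^ℓ f‖_{L^∞} ‖D^{m-ℓ} f‖_{L²} ≤ C ‖f‖_{L²}^{1/2} ‖Df‖_{L²}^{1/2} ‖D^{m+1} f‖_{L²}`,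
where the homogeneous derivative norms are defined on the Fourier side:
`‖D^s f‖_{L²}² = ∫ |ξ|^{2s} |f̂ ξ|²` and `D^ℓ f` is the inverse Fourier transform of
`ξ ↦ |ξ|^ℓ f̂ ξ`. -/
theorem sobolev_product_inequality :
    ∃ C : ℝ, 0 < C ∧ ∀ (m ℓ : ℕ), 1 ≤ m → ℓ ≤ m - 1 →
      ∀ (f : SchwartzMap (EuclideanSpace ℝ (Fin 3)) ℝ)
        (x : EuclideanSpace ℝ (Fin 3)),
      ‖𝓕⁻ (fun ξ => (‖ξ‖ : ℂ) ^ ℓ * 𝓕 (fun y => (f y : ℂ)) ξ) x‖ *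
        Real.sqrt (∫ ξ : EuclideanSpace ℝ (Fin 3),
          ‖ξ‖ ^ (2 * (m - ℓ)) * ‖𝓕 (fun y => (f y : ℂ)) ξ‖ ^ 2) ≤
      C * (Real.sqrt (∫ ξ : EuclideanSpace ℝ (Fin 3),
            ‖𝓕 (fun y => (f y : ℂ)) ξ‖ ^ 2)) ^ ((1 : ℝ) / 2) *
        (Real.sqrt (∫ ξ : EuclideanSpace ℝ (Fin 3),
            ‖ξ‖ ^ 2 * ‖𝓕 (fun y => (f y : ℂ)) ξ‖ ^ 2)) ^ ((1 : ℝ) / 2) *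
        Real.sqrt (∫ ξ : EuclideanSpace ℝ (Fin 3),
          ‖ξ‖ ^ (2 * (m + 1)) * ‖𝓕 (fun y => (f y : ℂ)) ξ‖ ^ 2) := by
  set c : ℝ := ∫ η : EuclideanSpace ℝ (Fin 3), ((1 + ‖η‖) ^ 4)⁻¹
  have hc : 0 < c := integral_pos_of_integrable_nonneg_nonzero (x := 0)
    ((by fun_prop : Continuous fun η : EuclideanSpace ℝ (Fin 3) => (1 + ‖η‖) ^ 4).inv₀
      fun η => by positivity)
    (integrable_inv_add_norm_pow_four volume (by simp) one_pos) (fun η => by positivity)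
    (by norm_num)
  have hC : 16 ^ 4 * c ^ 4 = (4 * √c) ^ 8 := by
    rw [mul_pow, show 8 = 2 * 4 by rfl, pow_mul √c, sq_sqrt hc.le]
    norm_num
  refine ⟨4 * √c, by positivity, fun m ℓ hm hℓ f x => ?_⟩
  set G : 𝓢(EuclideanSpace ℝ (Fin 3), ℂ) := 𝓕 (f.postcompCLM Complex.ofRealCLM)
  have key := G.norm_fourierInv_pow_eight_mul_le finrank_euclideanSpace_fin (by omega : ℓ < m) x
  rw [hC, homSobolevNormSq_zero_right] at key
  exact mul_sqrt_le_of_pow_eight_le (homSobolevNormSq_nonneg G (m - ℓ))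
    (integral_nonneg fun _ => by positivity) (homSobolevNormSq_nonneg G 1)
    (homSobolevNormSq_nonneg G (m + 1)) (by positivity) key
end

section
/- Let μ, γ, κ, χ > 0 satisfy 32 χ (μ + χ + γ) > 1. For ξ ∈ ℝ³ consider the 6×6 Hermitian-part bound for the block matrix M(ξ) = [[−(μ+χ)|ξ|² Id₃, iχ R₃(ξ)], [iχ R₃(ξ), −(γ|ξ|² + 2χ) Id₃ − κ ξξ^T]]. Then there exists a constant c > 0, depending only on μ, χ, γ, such that Re⟨z, M(ξ) z⟩ ≤ −c |ξ|² |z|² for all z ∈ ℂ⁶ and all ξ ∈ ℝ³. -/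
/-!
The Hermitian form splits along the blocks `z = (u, v)`. Since `R₃(ξ) w = w × ξ` with `ξ` real,
the two coupling blocks together contribute `-2χ Im ⟨u, v × ξ⟩ = -2χ Im (v ⬝ (ξ × ū))`, which is
at most `χ (|ξ|² |u|² + |v|²)` by `2ab ≤ a² + b²` and the Lagrange inequality
`|ξ × ū| ≤ |ξ| |u|`. The block `-κ ξ ξᵀ` is negative semidefinite, so the form is at most
`-μ |ξ|² |u|² - γ |ξ|² |v|² - χ |v|²`, and `c = min μ γ` works.
-/

open Matrix

theorem star_cross {R : Type*} [CommRing R] [StarRing R] (a b : Fin 3 → R) :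
    star (a ⨯₃ b) = star a ⨯₃ star b := by
  ext i; fin_cases i <;> simp [cross_apply, mul_comm]

theorem two_mul_norm_dotProduct_le {n R : Type*} [Fintype n] [NonUnitalSeminormedRing R]
    (u v : n → R) : 2 * ‖u ⬝ᵥ v‖ ≤ ∑ i, ‖u i‖ ^ 2 + ∑ i, ‖v i‖ ^ 2 := by
  calc 2 * ‖u ⬝ᵥ v‖ ≤ 2 * ∑ i, ‖u i‖ * ‖v i‖ := by
        gcongr
        exact (norm_sum_le _ _).trans (Finset.sum_le_sum fun i _ => norm_mul_le _ _)
    _ ≤ ∑ i, (‖u i‖ ^ 2 + ‖v i‖ ^ 2) := by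
        rw [Finset.mul_sum]; gcongr; rw [← mul_assoc]; exact two_mul_le_add_sq _ _
    _ = _ := Finset.sum_add_distrib

theorem star_dotProduct_fromBlocks_mulVec {l m α : Type*} [Fintype l] [Fintype m]
    [NonUnitalNonAssocSemiring α] [Star α] (A : Matrix l l α) (B : Matrix l m α)
    (C : Matrix m l α) (D : Matrix m m α) (z : l ⊕ m → α) :
    star z ⬝ᵥ (fromBlocks A B C D *ᵥ z) =
      star (z ∘ Sum.inl) ⬝ᵥ (A *ᵥ (z ∘ Sum.inl) + B *ᵥ (z ∘ Sum.inr)) +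
        star (z ∘ Sum.inr) ⬝ᵥ (C *ᵥ (z ∘ Sum.inl) + D *ᵥ (z ∘ Sum.inr)) := by
  rw [fromBlocks_mulVec, ← sumElim_dotProduct_sumElim, ← Sum.elim_comp_inl_inr (star z)]
  rfl

namespace Complex

variable {n : Type*} [Fintype n]

theorem re_star_dotProduct_self (u : n → ℂ) : (star u ⬝ᵥ u).re = ∑ i, ‖u i‖ ^ 2 := by
  simp [dotProduct, re_sum, Complex.sq_norm, normSq_apply]

theorem im_star_dotProduct_self (u : n → ℂ) : (star u ⬝ᵥ u).im = 0 := by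
  simp [dotProduct, im_sum, mul_comm]

theorem sum_norm_sq_cross_le (a b : Fin 3 → ℂ) :
    ∑ k, ‖(a ⨯₃ b) k‖ ^ 2 ≤ (∑ k, ‖a k‖ ^ 2) * ∑ k, ‖b k‖ ^ 2 := by
  have h := congrArg re (cross_dot_cross (star a) (star b) a b)
  rw [← star_cross, star_dotProduct b a] at h
  simp only [sub_re, mul_re, re_star_dotProduct_self, im_star_dotProduct_self, star_def,
    conj_re, conj_im, mul_zero, sub_zero] at h
  nlinarith [mul_self_nonneg (star a ⬝ᵥ b).re, mul_self_nonneg (star a ⬝ᵥ b).im]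

end Complex

def curlSymbol {R : Type*} [Ring R] (ξ : Fin 3 → R) : Matrix (Fin 3) (Fin 3) R :=
  of ![![0, ξ 2, -ξ 1], ![-(ξ 2), 0, ξ 0], ![ξ 1, -(ξ 0), 0]]

theorem curlSymbol_mulVec {R : Type*} [CommRing R] (ξ u : Fin 3 → R) :
    curlSymbol ξ *ᵥ u = u ⨯₃ ξ := by
  ext i
  fin_cases i <;>
    simp [curlSymbol, mulVec, dotProduct, Fin.sum_univ_three, cross_apply, sub_eq_add_neg,
      mul_comm, add_comm]

theorem curlSymbol_map_ofReal (ξ : Fin 3 → ℝ) :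
    (curlSymbol ξ).map Complex.ofReal = curlSymbol (Complex.ofReal ∘ ξ) := by
  ext i j; fin_cases i <;> fin_cases j <;> simp [curlSymbol]

open Complex in
theorem re_I_mul_curl_coupling_le (ξ : Fin 3 → ℝ) (u v : Fin 3 → ℂ) :
    (I * (star u ⬝ᵥ v ⨯₃ (ofReal ∘ ξ) + star v ⬝ᵥ u ⨯₃ (ofReal ∘ ξ))).re ≤
      (∑ k, ξ k ^ 2) * ∑ k, ‖u k‖ ^ 2 + ∑ k, ‖v k‖ ^ 2 := by
  set ξ' : Fin 3 → ℂ := ofReal ∘ ξ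
  set a := star u ⬝ᵥ v ⨯₃ ξ'
  have hξ' : star ξ' = ξ' := funext fun k => conj_ofReal (ξ k)
  have hanti : star v ⬝ᵥ u ⨯₃ ξ' = -star a := by
    rw [star_dotProduct, star_cross, hξ', dotProduct_comm, triple_product_permutation,
      ← cross_anticomm, dotProduct_neg, star_neg]
  have hnorm : ∑ k, ‖ξ' k‖ ^ 2 = ∑ k, ξ k ^ 2 := by simp [ξ']
  calc (I * (a + star v ⬝ᵥ u ⨯₃ ξ')).re = -2 * a.im := by
        rw [hanti]
        simp only [mul_re, I_re, I_im, add_re, add_im, neg_re, neg_im, star_def, conj_re, conj_im]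
        ring
    _ ≤ 2 * ‖v ⬝ᵥ ξ' ⨯₃ star u‖ := by
        rw [← triple_product_permutation]; linarith [neg_abs_le a.im, abs_im_le_norm a]
    _ ≤ ∑ k, ‖v k‖ ^ 2 + ∑ k, ‖(ξ' ⨯₃ star u) k‖ ^ 2 := two_mul_norm_dotProduct_le _ _
    _ ≤ ∑ k, ‖v k‖ ^ 2 + (∑ k, ξ k ^ 2) * ∑ k, ‖u k‖ ^ 2 := by
        gcongr; simpa [hnorm] using sum_norm_sq_cross_le ξ' (star u)
    _ = _ := add_comm _ _

open Complex ComplexOrder in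
theorem re_star_dotProduct_vecMulVec_map_ofReal_mulVec_nonneg {n : Type*} [Fintype n]
    (ξ : n → ℝ) (v : n → ℂ) :
    0 ≤ (star v ⬝ᵥ ((vecMulVec ξ ξ).map ofReal *ᵥ v)).re := by
  have hmap : (vecMulVec ξ ξ).map ofReal = vecMulVec (ofReal ∘ ξ) (star (ofReal ∘ ξ)) := by
    ext i j; simp [vecMulVec_apply]
  rw [hmap]
  exact (nonneg_iff.1 ((posSemidef_vecMulVec_self_star _).dotProduct_mulVec_nonneg v)).1

open Complex in
def micropolarSymbol (μ γ χ κ : ℝ) (ξ : Fin 3 → ℝ) :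
    Matrix (Fin 3 ⊕ Fin 3) (Fin 3 ⊕ Fin 3) ℂ :=
  fromBlocks ((-(((μ + χ) * ∑ i, ξ i ^ 2 : ℝ) : ℂ)) • 1)
    ((χ : ℂ) • I • (curlSymbol ξ).map ofReal) ((χ : ℂ) • I • (curlSymbol ξ).map ofReal)
    ((-((γ * ∑ i, ξ i ^ 2 + 2 * χ : ℝ) : ℂ)) • 1 - (κ : ℂ) • (vecMulVec ξ ξ).map ofReal)

open Complex in
theorem re_star_dotProduct_micropolarSymbol_mulVec (μ γ χ κ : ℝ) (ξ : Fin 3 → ℝ)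
    (z : Fin 3 ⊕ Fin 3 → ℂ) :
    (star z ⬝ᵥ (micropolarSymbol μ γ χ κ ξ *ᵥ z)).re =
      -((μ + χ) * ∑ i, ξ i ^ 2) * ∑ i, ‖z (.inl i)‖ ^ 2
        - (γ * ∑ i, ξ i ^ 2 + 2 * χ) * ∑ i, ‖z (.inr i)‖ ^ 2
        + χ * (I * (star (z ∘ .inl) ⬝ᵥ (z ∘ .inr) ⨯₃ (ofReal ∘ ξ)
            + star (z ∘ .inr) ⬝ᵥ (z ∘ .inl) ⨯₃ (ofReal ∘ ξ))).re
        - κ * (star (z ∘ .inr) ⬝ᵥ ((vecMulVec ξ ξ).map ofReal *ᵥ (z ∘ .inr))).re := by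
  rw [micropolarSymbol, star_dotProduct_fromBlocks_mulVec]
  simp only [smul_mulVec, sub_mulVec, one_mulVec, curlSymbol_map_ofReal, curlSymbol_mulVec]
  simp only [dotProduct_add, dotProduct_sub, dotProduct_smul, smul_eq_mul, add_re, sub_re,
    neg_mul, neg_re, re_ofReal_mul, re_star_dotProduct_self, mul_add, Function.comp_apply]
  ring

theorem micropolar_symbol_coercive_general (μ γ χ : ℝ) (hμ : 0 < μ) (hγ : 0 < γ) (hχ : 0 < χ) :
    ∃ c : ℝ, 0 < c ∧ ∀ (κ : ℝ), 0 < κ → ∀ (ξ : Fin 3 → ℝ) (z : Fin 3 ⊕ Fin 3 → ℂ),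
      (∑ i, (starRingEnd ℂ) (z i) *
        (Matrix.fromBlocks
          ((-(((μ + χ) * ∑ i, (ξ i) ^ 2 : ℝ) : ℂ)) • (1 : Matrix (Fin 3) (Fin 3) ℂ))
          (((χ : ℝ) : ℂ) • Complex.I •
            ((Matrix.of ![![0, ξ 2, -ξ 1], ![-(ξ 2), 0, ξ 0],
              ![ξ 1, -(ξ 0), 0]]).map (fun a => (a : ℂ))))
          (((χ : ℝ) : ℂ) • Complex.I •
            ((Matrix.of ![![0, ξ 2, -ξ 1], ![-(ξ 2), 0, ξ 0],
              ![ξ 1, -(ξ 0), 0]]).map (fun a => (a : ℂ))))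
          ((-((γ * (∑ i, (ξ i) ^ 2) + 2 * χ : ℝ) : ℂ)) • (1 : Matrix (Fin 3) (Fin 3) ℂ)
            - ((κ : ℝ) : ℂ) •
              ((Matrix.vecMulVec ξ ξ).map (fun a => (a : ℂ))))).mulVec z i).re ≤
      -c * (∑ i, (ξ i) ^ 2) * ∑ i, ‖z i‖ ^ 2 := by
  refine ⟨min μ γ, lt_min hμ hγ, fun κ hκ ξ z => ?_⟩
  change (star z ⬝ᵥ (micropolarSymbol μ γ χ κ ξ *ᵥ z)).re ≤ _
  rw [re_star_dotProduct_micropolarSymbol_mulVec, Fintype.sum_sum_type]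
  have hcoupling := re_I_mul_curl_coupling_le ξ (z ∘ .inl) (z ∘ .inr)
  simp only [Function.comp_apply] at hcoupling
  have hgraddiv := re_star_dotProduct_vecMulVec_map_ofReal_mulVec_nonneg ξ (z ∘ .inr)
  have hQ : 0 ≤ ∑ i, ξ i ^ 2 := by positivity
  have hu : 0 ≤ ∑ i, ‖z (.inl i)‖ ^ 2 := by positivity
  have hv : 0 ≤ ∑ i, ‖z (.inr i)‖ ^ 2 := by positivity
  have hμc : min μ γ ≤ μ := min_le_left _ _
  have hγc : min μ γ ≤ γ := min_le_right _ _
  nlinarith [mul_nonneg (mul_nonneg (sub_nonneg.2 hμc) hQ) hu,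
    mul_nonneg (mul_nonneg (sub_nonneg.2 hγc) hQ) hv, mul_nonneg hκ.le hgraddiv,
    mul_le_mul_of_nonneg_left hcoupling hχ.le]

/-- Coercivity of the symbol of the linearized micropolar system:
if `32 χ (μ + χ + γ) > 1` then there is `c > 0` depending only on `μ, χ, γ` with
`Re ⟨z, M(ξ) z⟩ ≤ -c |ξ|² |z|²` for all `z ∈ ℂ⁶`, `ξ ∈ ℝ³`, where
`M(ξ) = [[-(μ+χ)|ξ|² Id₃, iχR₃(ξ)], [iχR₃(ξ), -(γ|ξ|²+2χ)Id₃ - κξξᵀ]]`. -/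
theorem micropolar_symbol_coercive (μ γ χ : ℝ) (hμ : 0 < μ) (hγ : 0 < γ) (hχ : 0 < χ)
    (hsmall : 32 * χ * (μ + χ + γ) > 1) :
    ∃ c : ℝ, 0 < c ∧ ∀ (κ : ℝ), 0 < κ → ∀ (ξ : Fin 3 → ℝ) (z : Fin 3 ⊕ Fin 3 → ℂ),
      (∑ i, (starRingEnd ℂ) (z i) *
        (Matrix.fromBlocks
          ((-(((μ + χ) * ∑ i, (ξ i) ^ 2 : ℝ) : ℂ)) • (1 : Matrix (Fin 3) (Fin 3) ℂ))
          (((χ : ℝ) : ℂ) • Complex.I •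
            ((Matrix.of ![![0, ξ 2, -ξ 1], ![-(ξ 2), 0, ξ 0],
              ![ξ 1, -(ξ 0), 0]]).map (fun a => (a : ℂ))))
          (((χ : ℝ) : ℂ) • Complex.I •
            ((Matrix.of ![![0, ξ 2, -ξ 1], ![-(ξ 2), 0, ξ 0],
              ![ξ 1, -(ξ 0), 0]]).map (fun a => (a : ℂ))))
          ((-((γ * (∑ i, (ξ i) ^ 2) + 2 * χ : ℝ) : ℂ)) • (1 : Matrix (Fin 3) (Fin 3) ℂ)
            - ((κ : ℝ) : ℂ) •
              ((Matrix.vecMulVec ξ ξ).map (fun a => (a : ℂ))))).mulVec z i).re ≤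
      -c * (∑ i, (ξ i) ^ 2) * ∑ i, ‖z i‖ ^ 2 :=
  micropolar_symbol_coercive_general μ γ χ hμ hγ hχ
end
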